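/- arXiv:2212.02388 — 2 statements merged into one kernel-verified Lean document; each statement's English description precedes it below -/
import Mathlib

section
/- Let h ≥ 1, let r be the root of the complete binary tree T_h of height h, and let S ⊆ V(T_h) with 1 ≤ |S| < 2^{h−1}. Then there exist two unrelated vertices v₁ and v₂ of T_h such that, for each i ∈ {1,2}: (i) the depth of v_i is at most log₂|S| + 2; (ii) v_i ≠ r and the parent of v_i belongs to S ∪ {r}; and (iii) T_h − S contains a path from v_i to a leaf of T_h. -/
/-!
Let `d = ⌊log₂ |S|⌋ + 2`. The vertices of `S` of depth at least `d` lie above at most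
`|S| · 2 ^ (h - d) < 2 ^ (h - 1)` leaves, so each of the two halves of `T_h` contains a leaf `ℓ`
whose root path meets `S` only above depth `d`. Let `v` be the highest vertex of depth at least 1
on that path such that the path from `v` down to `ℓ` avoids `S`: its parent lies in `S` or is the
root, and its depth is at most `d`. The two vertices found in the two halves are unrelated.
-/

/-- Vertices of the complete binary tree of height `h`: a vertex of depth `i`
is a pair `⟨i, j⟩` where `j < 2 ^ i` is its left-to-right index at depth `i`. -/
abbrev BT (h : ℕ) := Σ i : Fin (h + 1), Fin (2 ^ (i : ℕ))

/-- The root of the complete binary tree. -/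
def btRoot (h : ℕ) : BT h := ⟨0, ⟨0, by positivity⟩⟩

/-- `p` is the parent of `v` in the complete binary tree: the children of
`⟨i, j⟩` are `⟨i + 1, 2 * j⟩` (left) and `⟨i + 1, 2 * j + 1⟩` (right). -/
def IsParent {h : ℕ} (p v : BT h) : Prop :=
  (v.1 : ℕ) = (p.1 : ℕ) + 1 ∧ (v.2 : ℕ) / 2 = (p.2 : ℕ)

/-- The complete binary tree `T_h` of height `h` as a simple graph. -/
def btTree (h : ℕ) : SimpleGraph (BT h) :=
  SimpleGraph.fromRel (fun p v => IsParent p v)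

/-- `a` is an ancestor of `v` (this includes `a = v`). -/
def IsAncestor {h : ℕ} (a v : BT h) : Prop :=
  (a.1 : ℕ) ≤ (v.1 : ℕ) ∧ (a.2 : ℕ) = (v.2 : ℕ) / 2 ^ ((v.1 : ℕ) - (a.1 : ℕ))

/-- A set of vertices of `T_h` is unrelated if no element of it is an ancestor of
another element of it. -/
def Unrelated {h : ℕ} (B : Set (BT h)) : Prop :=
  ∀ a ∈ B, ∀ v ∈ B, a ≠ v → ¬IsAncestor a v

/-- `v` is a leaf of `T_h`, i.e. has depth `h`. -/
def IsLeaf {h : ℕ} (v : BT h) : Prop := (v.1 : ℕ) = h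

/-- The graph `G_h`: the complete binary tree `T_h` together with, for each depth
`i ∈ {1, …, h}`, the edges of a path `D_i` through all the vertices of depth `i`
in left-to-right order. -/
def gGraph (h : ℕ) : SimpleGraph (BT h) :=
  SimpleGraph.fromRel (fun a b =>
    IsParent a b ∨ ((a.1 : ℕ) = (b.1 : ℕ) ∧ (a.2 : ℕ) + 1 = (b.2 : ℕ)))

/-- `T_h − S` contains a path from `v` to a leaf of `T_h`. -/
def ReachesLeafAvoiding {h : ℕ} (S : Set (BT h)) (v : BT h) : Prop :=
  ∃ (hv : v ∈ {u : BT h | u ∉ S}) (l : BT h) (hl : l ∈ {u : BT h | u ∉ S}),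
    IsLeaf l ∧ ((btTree h).induce {u : BT h | u ∉ S}).Reachable ⟨v, hv⟩ ⟨l, hl⟩

open Finset

theorem Nat.exists_le_forall_gt_not_and_eq_zero_or {p : ℕ → Prop} {D : ℕ}
    (hD : ∀ e, D < e → ¬p e) : ∃ s ≤ D, (∀ e, s < e → ¬p e) ∧ (s = 0 ∨ p s) := by
  classical
  have hex : ∃ s, ∀ e, s < e → ¬p e := ⟨D, hD⟩
  refine ⟨Nat.find hex, Nat.find_min' hex hD, Nat.find_spec hex, ?_⟩
  rcases Nat.eq_zero_or_pos (Nat.find hex) with h0 | hpos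
  · exact .inl h0
  · refine .inr (not_not.mp fun hs => Nat.find_min hex (Nat.sub_one_lt hpos.ne') fun e he => ?_)
    rcases (Nat.le_of_pred_lt he).eq_or_lt with rfl | hlt
    · exact hs
    · exact Nat.find_spec hex e hlt

theorem card_filter_div_eq_le (N : ℕ) {m : ℕ} (hm : 0 < m) (a : ℕ) :
    ((range N).filter (· / m = a)).card ≤ m := by
  refine (card_le_card_of_injOn (· % m) (fun j _ => by simpa using Nat.mod_lt j hm) ?_).trans
    (card_range m).le
  intro j hj k hk hjk
  rw [mem_coe, mem_filter] at hj hk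
  rw [← Nat.div_add_mod j m, ← Nat.div_add_mod k m, hj.2, hk.2]
  exact congrArg _ hjk

section CompleteBinaryTree

variable {h : ℕ}

theorem BT.ext_val {v w : BT h} (hd : (v.1 : ℕ) = w.1) (hi : (v.2 : ℕ) = w.2) : v = w := by
  obtain ⟨⟨i, hi'⟩, ⟨a, ha⟩⟩ := v
  obtain ⟨⟨i', hi''⟩, ⟨a', ha'⟩⟩ := w
  simp only at hd hi
  subst hd hi
  rfl

theorem IsParent.ne {p v : BT h} (hpv : IsParent p v) : p ≠ v := by
  rintro rfl
  exact absurd hpv.1 (by omega)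

theorem IsParent.adj {p v : BT h} (hpv : IsParent p v) : (btTree h).Adj p v := by
  rw [btTree, SimpleGraph.fromRel_adj]
  exact ⟨hpv.ne, Or.inl hpv⟩

/-- The vertex of depth `e` on the path from the root to the leaf with index `j`. The `min` and
`%` only make the function total: for `e ≤ h` and `j < 2 ^ h` it is `⟨e, j / 2 ^ (h - e)⟩`. -/
def leafAnc (h j e : ℕ) : BT h :=
  ⟨⟨min e h, by omega⟩, ⟨j / 2 ^ (h - e) % 2 ^ min e h, Nat.mod_lt _ (by positivity)⟩⟩

theorem leafAnc_depth {j e : ℕ} (he : e ≤ h) : ((leafAnc h j e).1 : ℕ) = e := by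
  simp [leafAnc, he]

theorem leafAnc_index {j e : ℕ} (he : e ≤ h) (hj : j < 2 ^ h) :
    ((leafAnc h j e).2 : ℕ) = j / 2 ^ (h - e) := by
  have hlt : j / 2 ^ (h - e) < 2 ^ e := by
    rw [Nat.div_lt_iff_lt_mul (by positivity), ← pow_add, Nat.add_sub_cancel' he]
    exact hj
  simp [leafAnc, he, Nat.mod_eq_of_lt hlt]

theorem leafAnc_zero {j : ℕ} (hj : j < 2 ^ h) : leafAnc h j 0 = btRoot h :=
  BT.ext_val (leafAnc_depth (Nat.zero_le h))
    (by rw [leafAnc_index (Nat.zero_le h) hj, Nat.sub_zero, Nat.div_eq_of_lt hj]; rfl)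

theorem isParent_leafAnc {j t : ℕ} (ht : t < h) (hj : j < 2 ^ h) :
    IsParent (leafAnc h j t) (leafAnc h j (t + 1)) := by
  refine ⟨by rw [leafAnc_depth ht, leafAnc_depth ht.le], ?_⟩
  rw [leafAnc_index ht hj, leafAnc_index ht.le hj, Nat.div_div_eq_div_mul, ← pow_succ,
    show h - (t + 1) + 1 = h - t by omega]

theorem ReachesLeafAvoiding.of_isLeaf {S : Set (BT h)} {v : BT h} (hv : v ∉ S)
    (hleaf : IsLeaf v) : ReachesLeafAvoiding S v :=
  ⟨hv, v, hv, hleaf, .rfl⟩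

theorem ReachesLeafAvoiding.of_adj {S : Set (BT h)} {v w : BT h} (hv : v ∉ S)
    (hvw : (btTree h).Adj v w) (hw : ReachesLeafAvoiding S w) : ReachesLeafAvoiding S v := by
  obtain ⟨hw', l, hl, hleaf, hreach⟩ := hw
  have hadj : ((btTree h).induce {u | u ∉ S}).Adj ⟨v, hv⟩ ⟨w, hw'⟩ := hvw
  exact ⟨hv, l, hl, hleaf, hadj.reachable.trans hreach⟩

theorem reachesLeafAvoiding_leafAnc {S : Set (BT h)} {j t : ℕ} (hj : j < 2 ^ h) (ht : t ≤ h)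
    (hS : ∀ e, t ≤ e → e ≤ h → leafAnc h j e ∉ S) :
    ReachesLeafAvoiding S (leafAnc h j t) := by
  induction ht using Nat.decreasingInduction with
  | self => exact .of_isLeaf (hS h le_rfl le_rfl) (leafAnc_depth le_rfl)
  | of_succ t ht ih =>
    exact .of_adj (hS t le_rfl ht.le) (isParent_leafAnc ht hj).adj
      (ih fun e he => hS e (by omega))

theorem exists_leaf_forall_leafAnc_not_mem (S : Finset (BT h)) {D : ℕ} {A : Finset ℕ}
    (hA : A ⊆ range (2 ^ h)) (hcard : S.card * 2 ^ (h - (D + 1)) < A.card) :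
    ∃ j ∈ A, ∀ e, D < e → e ≤ h → leafAnc h j e ∉ S := by
  by_contra! hblocked
  let below : BT h → Finset ℕ := fun s => (range (2 ^ h)).filter (· / 2 ^ (h - s.1) = s.2)
  have hcover : A ⊆ (S.filter fun s => D < s.1).biUnion below := by
    intro j hj
    obtain ⟨e, hDe, heh, hmem⟩ := hblocked j hj
    have hjh := mem_range.mp (hA hj)
    refine mem_biUnion.mpr ⟨_, mem_filter.mpr ⟨hmem, ?_⟩, mem_filter.mpr ⟨hA hj, ?_⟩⟩
    · rwa [leafAnc_depth heh]
    · rw [leafAnc_index heh hjh, leafAnc_depth heh]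
  have hbelow : ∀ s ∈ S.filter fun s => D < s.1, (below s).card ≤ 2 ^ (h - (D + 1)) := by
    intro s hs
    refine (card_filter_div_eq_le _ (by positivity) _).trans (Nat.pow_le_pow_right two_pos ?_)
    have := (mem_filter.mp hs).2
    omega
  have := (card_le_card hcover).trans (card_biUnion_le_card_mul _ _ _ hbelow)
  have := Nat.mul_le_mul_right (2 ^ (h - (D + 1))) (card_filter_le S fun s => D < s.1)
  omega

/-- The index of the child of the root above `v`; meaningful only for `v ≠ btRoot h`. -/
def branch (v : BT h) : ℕ := (v.2 : ℕ) / 2 ^ ((v.1 : ℕ) - 1)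

theorem IsAncestor.branch_eq {a v : BT h} (hav : IsAncestor a v) (ha : 1 ≤ (a.1 : ℕ)) :
    branch a = branch v := by
  rw [branch, hav.2, Nat.div_div_eq_div_mul, ← pow_add, branch]
  congr 2
  have := hav.1
  omega

theorem not_isAncestor_of_branch_ne {a v : BT h} (ha : 1 ≤ (a.1 : ℕ))
    (hav : branch a ≠ branch v) : ¬IsAncestor a v :=
  fun hanc => hav (hanc.branch_eq ha)

theorem branch_leafAnc {j t : ℕ} (ht1 : 1 ≤ t) (ht : t ≤ h) (hj : j < 2 ^ h) :
    branch (leafAnc h j t) = j / 2 ^ (h - 1) := by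
  rw [branch, leafAnc_index ht hj, leafAnc_depth ht, Nat.div_div_eq_div_mul, ← pow_add]
  congr 2
  omega

theorem exists_leafAnc_parent_mem_and_reachesLeafAvoiding {S : Set (BT h)} {j D : ℕ}
    (hj : j < 2 ^ h) (hD : D < h) (hS : ∀ e, D < e → e ≤ h → leafAnc h j e ∉ S) :
    ∃ s ≤ D, (leafAnc h j s ∈ S ∨ leafAnc h j s = btRoot h) ∧
      ReachesLeafAvoiding S (leafAnc h j (s + 1)) := by
  obtain ⟨s, hsD, habove, hs⟩ := Nat.exists_le_forall_gt_not_and_eq_zero_or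
    (p := fun e => e ≤ h ∧ leafAnc h j e ∈ S) fun e he ⟨heh, hmem⟩ => hS e he heh hmem
  refine ⟨s, hsD, ?_, reachesLeafAvoiding_leafAnc hj (by omega)
    fun e he heh hmem => habove e he ⟨heh, hmem⟩⟩
  rcases hs with rfl | ⟨-, hmem⟩
  · exact .inr (leafAnc_zero hj)
  · exact .inl hmem

theorem exists_reachesLeafAvoiding_of_branch (S : Finset (BT h)) (hS1 : 1 ≤ S.card)
    (hS2 : S.card < 2 ^ (h - 1)) {b : ℕ} (hb : b < 2) :
    ∃ v : BT h, 1 ≤ (v.1 : ℕ) ∧ branch v = b ∧ (v.1 : ℕ) ≤ Nat.log 2 S.card + 2 ∧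
      v ≠ btRoot h ∧ (∃ p : BT h, IsParent p v ∧ (p ∈ S ∨ p = btRoot h)) ∧
      ReachesLeafAvoiding (S : Set (BT h)) v := by
  set D := Nat.log 2 S.card + 1
  have hDh : D < h := by
    have := Nat.log_lt_of_lt_pow (by omega) hS2
    omega
  have hhalf : Ico (b * 2 ^ (h - 1)) ((b + 1) * 2 ^ (h - 1)) ⊆ range (2 ^ h) := by
    intro j hj
    rw [mem_Ico] at hj
    rw [mem_range, show h = h - 1 + 1 by omega, pow_succ]
    nlinarith
  have hcard :
      S.card * 2 ^ (h - (D + 1)) < (Ico (b * 2 ^ (h - 1)) ((b + 1) * 2 ^ (h - 1))).card := by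
    rw [Nat.card_Ico, ← Nat.sub_mul, Nat.add_sub_cancel_left, one_mul]
    calc S.card * 2 ^ (h - (D + 1)) < 2 ^ D * 2 ^ (h - (D + 1)) :=
          Nat.mul_lt_mul_of_pos_right (Nat.lt_pow_succ_log_self one_lt_two _) (by positivity)
      _ = 2 ^ (h - 1) := by rw [← pow_add]; congr 1; omega
  obtain ⟨j, hjA, hjS⟩ := exists_leaf_forall_leafAnc_not_mem S hhalf hcard
  have hj : j < 2 ^ h := mem_range.mp (hhalf hjA)
  obtain ⟨s, hsD, hparent, hreach⟩ :=
    exists_leafAnc_parent_mem_and_reachesLeafAvoiding (S := (S : Set (BT h))) hj hDh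
      (by simpa using hjS)
  have hdepth : ((leafAnc h j (s + 1)).1 : ℕ) = s + 1 := leafAnc_depth (by omega)
  refine ⟨leafAnc h j (s + 1), by omega, ?_, by omega, ?_,
    ⟨_, isParent_leafAnc (by omega) hj, by simpa using hparent⟩, hreach⟩
  · rw [branch_leafAnc (by omega) (by omega) hj]
    exact Nat.div_eq_of_lt_le (mem_Ico.mp hjA).1 (mem_Ico.mp hjA).2
  · exact ne_of_apply_ne (fun v : BT h => (v.1 : ℕ)) (by simp [hdepth, btRoot])

end CompleteBinaryTree

theorem stmt7_general (h : ℕ) (S : Finset (BT h))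
    (hS1 : 1 ≤ S.card) (hS2 : S.card < 2 ^ (h - 1)) :
    ∃ v₁ v₂ : BT h, v₁ ≠ v₂ ∧ ¬IsAncestor v₁ v₂ ∧ ¬IsAncestor v₂ v₁ ∧
      (((v₁.1 : ℕ) : ℝ) ≤ Real.logb 2 S.card + 2 ∧
        v₁ ≠ btRoot h ∧
        (∃ p : BT h, IsParent p v₁ ∧ (p ∈ S ∨ p = btRoot h)) ∧
        ReachesLeafAvoiding (S : Set (BT h)) v₁) ∧
      (((v₂.1 : ℕ) : ℝ) ≤ Real.logb 2 S.card + 2 ∧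
        v₂ ≠ btRoot h ∧
        (∃ p : BT h, IsParent p v₂ ∧ (p ∈ S ∨ p = btRoot h)) ∧
        ReachesLeafAvoiding (S : Set (BT h)) v₂) := by
  obtain ⟨v₁, hv₁, hb₁, hd₁, hr₁, hp₁, hq₁⟩ :=
    exists_reachesLeafAvoiding_of_branch S hS1 hS2 zero_lt_two
  obtain ⟨v₂, hv₂, hb₂, hd₂, hr₂, hp₂, hq₂⟩ :=
    exists_reachesLeafAvoiding_of_branch S hS1 hS2 one_lt_two
  have hbranch : branch v₁ ≠ branch v₂ := by rw [hb₁, hb₂]; exact zero_ne_one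
  have hdepth (v : BT h) (hv : (v.1 : ℕ) ≤ Nat.log 2 S.card + 2) :
      ((v.1 : ℕ) : ℝ) ≤ Real.logb 2 S.card + 2 := by
    have hlog : (Nat.log 2 S.card : ℝ) ≤ Real.logb 2 S.card := mod_cast Real.natLog_le_logb _ _
    have hv' : ((v.1 : ℕ) : ℝ) ≤ Nat.log 2 S.card + 2 := mod_cast hv
    linarith
  exact ⟨v₁, v₂, fun heq => hbranch (congrArg branch heq),
    not_isAncestor_of_branch_ne hv₁ hbranch, not_isAncestor_of_branch_ne hv₂ hbranch.symm,
    ⟨hdepth v₁ hd₁, hr₁, hp₁, hq₁⟩, ⟨hdepth v₂ hd₂, hr₂, hp₂, hq₂⟩⟩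

/-- If `1 ≤ |S| < 2 ^ (h - 1)`, then `T_h` has two unrelated vertices `v₁, v₂`, each
of depth at most `log₂ |S| + 2`, distinct from the root, with parent in `S ∪ {root}`,
and joined to a leaf of `T_h` by a path of `T_h − S`. -/
theorem stmt7 (h : ℕ) (hh : 1 ≤ h) (S : Finset (BT h))
    (hS1 : 1 ≤ S.card) (hS2 : S.card < 2 ^ (h - 1)) :
    ∃ v₁ v₂ : BT h, v₁ ≠ v₂ ∧ ¬IsAncestor v₁ v₂ ∧ ¬IsAncestor v₂ v₁ ∧
      (((v₁.1 : ℕ) : ℝ) ≤ Real.logb 2 S.card + 2 ∧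
        v₁ ≠ btRoot h ∧
        (∃ p : BT h, IsParent p v₁ ∧ (p ∈ S ∨ p = btRoot h)) ∧
        ReachesLeafAvoiding (S : Set (BT h)) v₁) ∧
      (((v₂.1 : ℕ) : ℝ) ≤ Real.logb 2 S.card + 2 ∧
        v₂ ≠ btRoot h ∧
        (∃ p : BT h, IsParent p v₂ ∧ (p ∈ S ∨ p = btRoot h)) ∧
        ReachesLeafAvoiding (S : Set (BT h)) v₂) :=
  stmt7_general h S hS1 hS2
end

section
/- For each h ∈ ℕ with h ≥ 1, the graph G_h is planar and has maximum degree at most 5. -/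
/-- A topological embedding of a graph in the plane: an injective assignment of points
to vertices and of arcs (injective paths) to edges, such that an arc meets a vertex
point only at its own endpoints and two arcs of distinct edges meet only in common
endpoints. -/
structure PlaneEmbedding {α : Type*} (G : SimpleGraph α) where
  vtx : α → ℝ × ℝ
  inj : Function.Injective vtx
  arc : ∀ ⦃u v : α⦄, G.Adj u v → _root_.Path (vtx u) (vtx v)
  arc_inj : ∀ ⦃u v : α⦄ (h : G.Adj u v), Function.Injective (arc h)
  arc_symm : ∀ ⦃u v : α⦄ (h : G.Adj u v), arc h.symm = (arc h).symm
  arc_avoid : ∀ ⦃u v : α⦄ (h : G.Adj u v) (w : α),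
    vtx w ∈ Set.range (arc h) → w = u ∨ w = v
  arc_disjoint : ∀ ⦃u v a b : α⦄ (h₁ : G.Adj u v) (h₂ : G.Adj a b), s(u, v) ≠ s(a, b) →
    Set.range (arc h₁) ∩ Set.range (arc h₂) ⊆ {vtx u, vtx v} ∩ {vtx a, vtx b}

/-- A graph is planar if it admits a plane embedding in the plane `ℝ × ℝ`. -/
def IsPlanar {α : Type*} (G : SimpleGraph α) : Prop :=
  Nonempty (PlaneEmbedding G)

/-!
Draw the vertex of depth `i` and index `j` at the lattice point `(j, i)` and every edge as a
straight segment. Along each edge one coordinate advances by exactly `1`, so the only lattice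
points on an edge are its endpoints, and it suffices that two distinct edges meet only at lattice
points. Integrality of the heights (and, on a common path `D_i`, of the indices) forces this
unless both are tree edges between depths `i` and `i + 1`. Two such edges with a common parent
meet only there; otherwise the children of the left parent lie to the left of those of the
right one, so the left edge stays strictly to the left at every height.

Every vertex has at most a parent, two children and two neighbours on its path `D_i`.
-/

open Set AffineMap
open scoped Convex

lemma BT.ext_val_s15 {h : ℕ} {u v : BT h} (h₁ : (u.1 : ℕ) = v.1) (h₂ : (u.2 : ℕ) = v.2) :
    u = v := by
  obtain ⟨⟨i, hi⟩, ⟨j, hj⟩⟩ := u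
  obtain ⟨⟨i', hi'⟩, ⟨j', hj'⟩⟩ := v
  simp only at h₁ h₂
  subst h₁ h₂
  rfl

section StraightLine

variable {α : Type*} {r : α → α → Prop}

lemma exists_rel_segment_eq_of_fromRel_adj {pos : α → ℝ × ℝ} {u v : α}
    (huv : (SimpleGraph.fromRel r).Adj u v) :
    ∃ a b, r a b ∧ s(a, b) = s(u, v) ∧ [pos a -[ℝ] pos b] = [pos u -[ℝ] pos v] := by
  rcases ((SimpleGraph.fromRel_adj r u v).mp huv).2 with h | h
  · exact ⟨u, v, h, rfl, rfl⟩
  · exact ⟨v, u, h, Sym2.eq_swap, segment_symm ℝ _ _⟩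

noncomputable def PlaneEmbedding.ofSegments (pos : α → ℝ × ℝ) (inj : Function.Injective pos)
    (avoid : ∀ ⦃u v⦄, r u v → ∀ w, pos w ∈ [pos u -[ℝ] pos v] → w = u ∨ w = v)
    (cross : ∀ ⦃u v a b⦄, r u v → r a b → s(u, v) ≠ s(a, b) →
      [pos u -[ℝ] pos v] ∩ [pos a -[ℝ] pos b] ⊆ range pos) :
    PlaneEmbedding (SimpleGraph.fromRel r) :=
  have avoid' : ∀ ⦃u v⦄, (SimpleGraph.fromRel r).Adj u v →
      ∀ w, pos w ∈ [pos u -[ℝ] pos v] → w ∈ s(u, v) := by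
    intro u v huv w hw
    obtain ⟨a, b, hab, he, hs⟩ := exists_rel_segment_eq_of_fromRel_adj (pos := pos) huv
    rw [← hs] at hw
    rw [← he, Sym2.mem_iff]
    exact avoid hab w hw
  { vtx := pos
    inj := inj
    arc := fun u v _ => Path.segment (pos u) (pos v)
    arc_inj := fun _ _ huv => Path.segment_injective_of_ne (inj.ne huv.ne)
    arc_symm := fun u v _ => (Path.segment_symm (pos u) (pos v)).symm
    arc_avoid := fun u v huv w hw => by
      rw [Path.range_segment] at hw
      exact Sym2.mem_iff.mp (avoid' huv w hw)
    arc_disjoint := fun u v a b huv hab hne z hz => by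
      simp only [Path.range_segment] at hz
      obtain ⟨c, d, hcd, he₁, hs₁⟩ := exists_rel_segment_eq_of_fromRel_adj (pos := pos) huv
      obtain ⟨e, f, hef, he₂, hs₂⟩ := exists_rel_segment_eq_of_fromRel_adj (pos := pos) hab
      obtain ⟨w, rfl⟩ : z ∈ range pos :=
        cross hcd hef (by rwa [he₁, he₂]) (by rwa [hs₁, hs₂])
      exact ⟨(Sym2.mem_iff.mp (avoid' huv w hz.1)).imp (congrArg pos) (congrArg pos),
        (Sym2.mem_iff.mp (avoid' hab w hz.2)).imp (congrArg pos) (congrArg pos)⟩ }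

lemma lineMap_mem_range_of_eq_zero_or_eq_one {E : Type*} [AddCommGroup E] [Module ℝ E]
    (pos : α → E) {u v : α} {t : ℝ} (ht : t = 0 ∨ t = 1) :
    lineMap (pos u) (pos v) t ∈ range pos := by
  rcases ht with rfl | rfl
  exacts [⟨u, (lineMap_apply_zero _ _).symm⟩, ⟨v, (lineMap_apply_one _ _).symm⟩]

end StraightLine

lemma eq_zero_or_eq_one_of_natCast_eq_add {m n : ℕ} {t : ℝ} (ht : t ∈ Icc (0 : ℝ) 1)
    (h : (m : ℝ) = n + t) : t = 0 ∨ t = 1 := by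
  rcases le_or_gt m n with hmn | hmn
  · left
    have : (m : ℝ) ≤ n := by exact_mod_cast hmn
    linarith [ht.1]
  · right
    have : (n : ℝ) + 1 ≤ m := by exact_mod_cast hmn
    linarith [ht.2]

lemma eq_zero_or_eq_one_of_natCast_add_eq_add {m n : ℕ} {s t : ℝ} (hmn : m ≠ n)
    (hs : s ∈ Icc (0 : ℝ) 1) (ht : t ∈ Icc (0 : ℝ) 1) (h : (m : ℝ) + t = n + s) :
    t = 0 ∨ t = 1 := by
  rcases hmn.lt_or_gt with hmn | hmn
  · right
    have : (m : ℝ) + 1 ≤ n := by exact_mod_cast hmn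
    linarith [hs.1, ht.2]
  · left
    have : (n : ℝ) + 1 ≤ m := by exact_mod_cast hmn
    linarith [hs.2, ht.1]

lemma lineMap_lt_lineMap {p q p' q' t : ℝ} (hp : p < p') (hq : q < q')
    (ht : t ∈ Icc (0 : ℝ) 1) :
    lineMap p q t < lineMap p' q' t := by
  rw [lineMap_apply_ring, lineMap_apply_ring]
  rcases ht.2.lt_or_eq with ht1 | rfl
  · nlinarith [ht.1]
  · linarith

/-- `b` follows `a` on the path `D_i`. -/
def IsRightNeighbor {h : ℕ} (a b : BT h) : Prop :=
  (a.1 : ℕ) = b.1 ∧ (a.2 : ℕ) + 1 = b.2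

section Drawing

variable {h : ℕ}

noncomputable def btPos (v : BT h) : ℝ × ℝ := (((v.2 : ℕ) : ℝ), ((v.1 : ℕ) : ℝ))

lemma btPos_injective : Function.Injective (btPos (h := h)) := fun u v huv => by
  simp only [btPos, Prod.ext_iff, Nat.cast_inj] at huv
  exact BT.ext_val_s15 huv.2 huv.1

lemma lineMap_btPos (u v : BT h) (t : ℝ) :
    lineMap (btPos u) (btPos v) t =
      (lineMap ((u.2 : ℕ) : ℝ) ((v.2 : ℕ) : ℝ) t,
        lineMap ((u.1 : ℕ) : ℝ) ((v.1 : ℕ) : ℝ) t) :=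
  Prod.ext (fst_lineMap _ _ _) (snd_lineMap _ _ _)

variable {u v a b : BT h} {s t : ℝ}

lemma IsParent.lineMap_depth (huv : IsParent u v) (t : ℝ) :
    lineMap ((u.1 : ℕ) : ℝ) ((v.1 : ℕ) : ℝ) t = (u.1 : ℕ) + t := by
  rw [lineMap_apply_ring', huv.1]
  push_cast
  ring

lemma IsRightNeighbor.lineMap_depth (huv : IsRightNeighbor u v) (t : ℝ) :
    lineMap ((u.1 : ℕ) : ℝ) ((v.1 : ℕ) : ℝ) t = (u.1 : ℕ) := by
  rw [huv.1, lineMap_same_apply]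

lemma IsRightNeighbor.lineMap_index (huv : IsRightNeighbor u v) (t : ℝ) :
    lineMap ((u.2 : ℕ) : ℝ) ((v.2 : ℕ) : ℝ) t = (u.2 : ℕ) + t := by
  rw [lineMap_apply_ring', ← huv.2]
  push_cast
  ring

lemma btPos_mem_segment {w : BT h} (huv : IsParent u v ∨ IsRightNeighbor u v)
    (hw : btPos w ∈ [btPos u -[ℝ] btPos v]) : w = u ∨ w = v := by
  rw [segment_eq_image_lineMap] at hw
  obtain ⟨t, ht, hwt⟩ := hw
  have hcoord := hwt
  rw [lineMap_btPos, btPos, Prod.mk.injEq] at hcoord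
  have ht01 : t = 0 ∨ t = 1 := by
    rcases huv with huv | huv
    · exact eq_zero_or_eq_one_of_natCast_eq_add ht (hcoord.2.symm.trans (huv.lineMap_depth t))
    · exact eq_zero_or_eq_one_of_natCast_eq_add ht (hcoord.1.symm.trans (huv.lineMap_index t))
  rcases ht01 with rfl | rfl
  · exact .inl (btPos_injective (by rw [← hwt, lineMap_apply_zero]))
  · exact .inr (btPos_injective (by rw [← hwt, lineMap_apply_one]))

lemma eq_zero_or_eq_one_of_lineMap_btPos_eq_of_isParent_of_isParent
    (huv : IsParent u v) (hab : IsParent a b) (hne : s(u, v) ≠ s(a, b))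
    (ht : t ∈ Icc (0 : ℝ) 1) (hs : s ∈ Icc (0 : ℝ) 1)
    (hz : lineMap (btPos u) (btPos v) t = lineMap (btPos a) (btPos b) s) : t = 0 ∨ t = 1 := by
  rw [lineMap_btPos, lineMap_btPos, Prod.mk.injEq, huv.lineMap_depth, hab.lineMap_depth] at hz
  obtain ⟨hx, hy⟩ := hz
  by_cases hd : (u.1 : ℕ) = a.1
  · obtain rfl : t = s := by rw [hd] at hy; linarith
    rcases lt_trichotomy (u.2 : ℕ) a.2 with hlt | hj | hgt
    · have hvb : (v.2 : ℕ) < b.2 := by have := huv.2; have := hab.2; omega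
      exact absurd hx (lineMap_lt_lineMap (by exact_mod_cast hlt) (by exact_mod_cast hvb) ht).ne
    · obtain rfl : u = a := BT.ext_val_s15 hd hj
      rw [lineMap_apply_ring', lineMap_apply_ring'] at hx
      have : t * (((v.2 : ℕ) : ℝ) - (b.2 : ℕ)) = 0 := by linarith
      rcases mul_eq_zero.mp this with rfl | hvb
      · exact .inl rfl
      · refine absurd ?_ hne
        rw [BT.ext_val_s15 (huv.1.trans hab.1.symm) (by exact_mod_cast sub_eq_zero.mp hvb)]
    · have hvb : (b.2 : ℕ) < v.2 := by have := huv.2; have := hab.2; omega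
      exact absurd hx (lineMap_lt_lineMap (by exact_mod_cast hgt) (by exact_mod_cast hvb) ht).ne'
  · exact eq_zero_or_eq_one_of_natCast_add_eq_add hd hs ht hy

lemma eq_zero_or_eq_one_of_lineMap_btPos_eq_of_isRightNeighbor_of_isParent
    (huv : IsRightNeighbor u v) (hab : IsParent a b) (hs : s ∈ Icc (0 : ℝ) 1)
    (hz : lineMap (btPos u) (btPos v) t = lineMap (btPos a) (btPos b) s) : s = 0 ∨ s = 1 := by
  rw [lineMap_btPos, lineMap_btPos, Prod.mk.injEq, huv.lineMap_depth, hab.lineMap_depth] at hz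
  exact eq_zero_or_eq_one_of_natCast_eq_add hs hz.2

lemma eq_zero_or_eq_one_of_lineMap_btPos_eq_of_isRightNeighbor_of_isRightNeighbor
    (huv : IsRightNeighbor u v) (hab : IsRightNeighbor a b)
    (hne : s(u, v) ≠ s(a, b)) (ht : t ∈ Icc (0 : ℝ) 1) (hs : s ∈ Icc (0 : ℝ) 1)
    (hz : lineMap (btPos u) (btPos v) t = lineMap (btPos a) (btPos b) s) : t = 0 ∨ t = 1 := by
  rw [lineMap_btPos, lineMap_btPos, Prod.mk.injEq, huv.lineMap_depth, hab.lineMap_depth,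
    huv.lineMap_index, hab.lineMap_index, Nat.cast_inj] at hz
  obtain ⟨hx, hd⟩ := hz
  by_cases hj : (u.2 : ℕ) = a.2
  · obtain rfl : u = a := BT.ext_val_s15 hd hj
    refine absurd ?_ hne
    rw [BT.ext_val_s15 (huv.1.symm.trans hab.1) (huv.2.symm.trans hab.2)]
  · exact eq_zero_or_eq_one_of_natCast_add_eq_add hj hs ht hx

lemma segment_btPos_inter_subset (huv : IsParent u v ∨ IsRightNeighbor u v)
    (hab : IsParent a b ∨ IsRightNeighbor a b) (hne : s(u, v) ≠ s(a, b)) :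
    [btPos u -[ℝ] btPos v] ∩ [btPos a -[ℝ] btPos b] ⊆ range (btPos (h := h)) := by
  rintro z ⟨hz₁, hz₂⟩
  rw [segment_eq_image_lineMap] at hz₁ hz₂
  obtain ⟨t, ht, rfl⟩ := hz₁
  obtain ⟨s, hs, hst⟩ := hz₂
  rcases huv with huv | huv <;> rcases hab with hab | hab
  · exact lineMap_mem_range_of_eq_zero_or_eq_one btPos
      (eq_zero_or_eq_one_of_lineMap_btPos_eq_of_isParent_of_isParent huv hab hne ht hs hst.symm)
  · exact lineMap_mem_range_of_eq_zero_or_eq_one btPos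
      (eq_zero_or_eq_one_of_lineMap_btPos_eq_of_isRightNeighbor_of_isParent hab huv ht hst)
  · rw [← hst]
    exact lineMap_mem_range_of_eq_zero_or_eq_one btPos
      (eq_zero_or_eq_one_of_lineMap_btPos_eq_of_isRightNeighbor_of_isParent huv hab hs hst.symm)
  · exact lineMap_mem_range_of_eq_zero_or_eq_one btPos
      (eq_zero_or_eq_one_of_lineMap_btPos_eq_of_isRightNeighbor_of_isRightNeighbor
        huv hab hne ht hs hst.symm)

end Drawing

lemma gGraph_isPlanar (h : ℕ) : IsPlanar (gGraph h) :=
  ⟨PlaneEmbedding.ofSegments btPos btPos_injective (fun _ _ huv _ => btPos_mem_segment huv)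
    (fun _ _ _ _ => segment_btPos_inter_subset)⟩

lemma gGraph_neighborSet_ncard_le (h : ℕ) (v : BT h) :
    ((gGraph h).neighborSet v).ncard ≤ 5 := by
  let coords : BT h → ℕ × ℕ := fun w => (w.1, w.2)
  have coords_inj : Function.Injective coords := fun u w huw =>
    BT.ext_val_s15 (congrArg Prod.fst huw) (congrArg Prod.snd huw)
  set i : ℕ := (v.1 : ℕ)
  set j : ℕ := (v.2 : ℕ)
  let candidates : List (ℕ × ℕ) :=
    [(i - 1, j / 2), (i, j - 1), (i, j + 1), (i + 1, 2 * j), (i + 1, 2 * j + 1)]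
  have hsub : coords '' (gGraph h).neighborSet v ⊆ (candidates.toFinset : Set (ℕ × ℕ)) := by
    rintro _ ⟨w, hw, rfl⟩
    have hvw : (gGraph h).Adj v w := hw
    simp only [gGraph, SimpleGraph.fromRel_adj, IsParent, Finset.mem_coe, List.mem_toFinset,
      List.mem_cons, Prod.ext_iff, List.not_mem_nil, coords, candidates] at hvw ⊢
    omega
  calc ((gGraph h).neighborSet v).ncard = (coords '' (gGraph h).neighborSet v).ncard :=
        (Set.ncard_image_of_injective _ coords_inj).symm
    _ ≤ candidates.toFinset.card := (Set.ncard_le_ncard hsub).trans (Set.ncard_coe_finset _).le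
    _ ≤ 5 := candidates.toFinset_card_le

theorem stmt15_general (h : ℕ) :
    IsPlanar (gGraph h) ∧ ∀ v : BT h, ((gGraph h).neighborSet v).ncard ≤ 5 :=
  ⟨gGraph_isPlanar h, gGraph_neighborSet_ncard_le h⟩

/-- For every `h ≥ 1`, the graph `G_h` is planar and has maximum degree at most `5`. -/
theorem stmt15 (h : ℕ) (hh : 1 ≤ h) :
    IsPlanar (gGraph h) ∧ ∀ v : BT h, ((gGraph h).neighborSet v).ncard ≤ 5 :=
  stmt15_general h
end
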